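/- arXiv:2507.03966 — 3 statements merged into one kernel-verified Lean document; each statement's English description precedes it below -/
import Mathlib

section
/- Let c ∈ (−√2, √2) and β = √(2 − c²). For every four times continuously differentiable function f : ℝ → ℝ and every x ∈ ℝ, one has S_c((L_− − c²)(S_c* f))(x) = f''''(x) − β²·f''(x); that is, the factorization identity S_c ∘ (L_− − c²) ∘ S_c* = (∂_x² − β²)·∂_x² holds. -/
open Real

/-- The real part of the traveling-wave profile. -/
noncomputable def Rc (c x : ℝ) : ℝ :=
  Real.sqrt ((2 - c ^ 2) / 2) * Real.tanh (Real.sqrt (2 - c ^ 2) * x / 2)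

/-- The soliton profile `Q_c(x) = (β²/2) sech²(βx/2)` with `β = √(2 - c²)`. -/
noncomputable def Q (c x : ℝ) : ℝ :=
  (Real.sqrt (2 - c ^ 2)) ^ 2 / 2
    * ((Real.cosh (Real.sqrt (2 - c ^ 2) * x / 2))⁻¹) ^ 2

/-- The operator `S_c f = f' + √2 R_c f`. -/
noncomputable def Sc (c : ℝ) (f : ℝ → ℝ) (x : ℝ) : ℝ :=
  deriv f x + Real.sqrt 2 * Rc c x * f x

/-- The operator `S_c* f = -f' + √2 R_c f`. -/
noncomputable def Sst (c : ℝ) (f : ℝ → ℝ) (x : ℝ) : ℝ :=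
  -deriv f x + Real.sqrt 2 * Rc c x * f x

/-- The operator `L₋ f = -f'' + c² f - Q_c f`. -/
noncomputable def Lm (c : ℝ) (f : ℝ → ℝ) (x : ℝ) : ℝ :=
  -deriv (deriv f) x + c ^ 2 * f x - Q c x * f x

/-
Put `a = √2 R_c = β tanh (β x / 2)`. Then `Q_c = a'` and `a` solves the Riccati equation
`2 a' + a² = β²`, so `a'' = -a a'`. With `S_c* = -∂ + a`, `L₋ - c² = -∂² - a'` and `S_c = ∂ + a`,
expanding gives `(L₋ - c²) S_c* = -∂ S_c* ∂` (the coefficient `a'' + a a'` of `f` cancels) and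
`S_c ∂ S_c* = -∂³ + (2 a' + a²) ∂ + (a'' + a a') = -∂³ + β² ∂`.
-/

theorem Real.hasDerivAt_tanh (x : ℝ) : HasDerivAt tanh ((cosh x)⁻¹ ^ 2) x := by
  have hcosh : cosh x ≠ 0 := (cosh_pos x).ne'
  have h : HasDerivAt (fun x => sinh x / cosh x) _ x :=
    (hasDerivAt_sinh x).div (hasDerivAt_cosh x) hcosh
  rw [← funext tanh_eq_sinh_div_cosh] at h
  refine h.congr_deriv ?_
  field_simp
  linear_combination cosh_sq_sub_sinh_sq x

theorem Real.inv_cosh_sq_add_tanh_sq (x : ℝ) : (cosh x)⁻¹ ^ 2 + tanh x ^ 2 = 1 := by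
  have hcosh : cosh x ≠ 0 := (cosh_pos x).ne'
  rw [tanh_eq_sinh_div_cosh]
  field_simp
  linear_combination (cosh_sq_sub_sinh_sq x).symm

theorem hasDerivAt_mul_tanh_mul_div_two (β y : ℝ) :
    HasDerivAt (fun y => β * tanh (β * y / 2)) (β ^ 2 / 2 * (cosh (β * y / 2))⁻¹ ^ 2) y := by
  have h : HasDerivAt (fun y => β * tanh (β * y / 2)) _ y :=
    ((Real.hasDerivAt_tanh _).comp y (((hasDerivAt_id' y).const_mul β).div_const 2)).const_mul β
  exact h.congr_deriv (by ring)

theorem ContDiff.differentiable_deriv_iterate {f : ℝ → ℝ} {n k : ℕ} (hf : ContDiff ℝ n f)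
    (hk : k < n) : Differentiable ℝ (deriv^[k] f) := by
  rw [← iteratedDeriv_eq_iterate]
  exact hf.differentiable_iteratedDeriv k (mod_cast hk)

section Riccati

variable {a a' u : ℝ → ℝ} {β : ℝ}

theorem hasDerivAt_of_riccati (ha : ∀ y, HasDerivAt a (a' y) y)
    (hr : ∀ y, 2 * a' y + a y ^ 2 = β ^ 2) (y : ℝ) : HasDerivAt a' (-(a y * a' y)) y := by
  have h : HasDerivAt (fun y => (β ^ 2 - a y * a y) / 2) _ y :=
    (((ha y).mul (ha y)).const_sub (β ^ 2)).div_const 2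
  rw [show (fun y => (β ^ 2 - a y * a y) / 2) = a' from
    funext fun y => by linear_combination -(hr y) / 2] at h
  exact h.congr_deriv (by ring)

theorem deriv_neg_deriv_add_mul (ha : ∀ y, HasDerivAt a (a' y) y) (hu : Differentiable ℝ u)
    (hu' : Differentiable ℝ (deriv u)) :
    deriv (fun y => -deriv u y + a y * u y)
      = fun y => -deriv (deriv u) y + (a' y * u y + a y * deriv u y) :=
  funext fun y => ((hu' y).hasDerivAt.neg.add ((ha y).mul (hu y).hasDerivAt)).deriv

theorem deriv_deriv_neg_deriv_add_mul (ha : ∀ y, HasDerivAt a (a' y) y)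
    (ha' : ∀ y, HasDerivAt a' (-(a y * a' y)) y) (hu : ContDiff ℝ 3 u) (x : ℝ) :
    deriv (deriv (fun y => -deriv u y + a y * u y)) x
      = -deriv (deriv (deriv u)) x - a x * a' x * u x + 2 * a' x * deriv u x
        + a x * deriv (deriv u) x := by
  have hu₀ : Differentiable ℝ u := hu.differentiable_deriv_iterate (k := 0) (by norm_num)
  have hu₁ : Differentiable ℝ (deriv u) := hu.differentiable_deriv_iterate (k := 1) (by norm_num)
  have hu₂ : Differentiable ℝ (deriv (deriv u)) :=
    hu.differentiable_deriv_iterate (k := 2) (by norm_num)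
  have h : HasDerivAt (fun y => -deriv (deriv u) y + (a' y * u y + a y * deriv u y)) _ x :=
    (hu₂ x).hasDerivAt.neg.add (((ha' x).mul (hu₀ x).hasDerivAt).add
      ((ha x).mul (hu₁ x).hasDerivAt))
  rw [deriv_neg_deriv_add_mul ha hu₀ hu₁, h.deriv]
  ring

theorem neg_deriv_deriv_neg_deriv_add_mul_sub (ha : ∀ y, HasDerivAt a (a' y) y)
    (ha' : ∀ y, HasDerivAt a' (-(a y * a' y)) y) (hu : ContDiff ℝ 3 u) (x : ℝ) :
    -deriv (deriv (fun y => -deriv u y + a y * u y)) x - a' x * (-deriv u x + a x * u x)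
      = -deriv (fun y => -deriv (deriv u) y + a y * deriv u y) x := by
  have hu₁ : Differentiable ℝ (deriv u) := hu.differentiable_deriv_iterate (k := 1) (by norm_num)
  have hu₂ : Differentiable ℝ (deriv (deriv u)) :=
    hu.differentiable_deriv_iterate (k := 2) (by norm_num)
  rw [deriv_deriv_neg_deriv_add_mul ha ha' hu, deriv_neg_deriv_add_mul ha hu₁ hu₂]
  ring

theorem deriv_deriv_neg_deriv_add_mul_add (ha : ∀ y, HasDerivAt a (a' y) y)
    (hr : ∀ y, 2 * a' y + a y ^ 2 = β ^ 2) (hu : ContDiff ℝ 3 u) (x : ℝ) :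
    deriv (deriv (fun y => -deriv u y + a y * u y)) x
        + a x * deriv (fun y => -deriv u y + a y * u y) x
      = -deriv (deriv (deriv u)) x + β ^ 2 * deriv u x := by
  have hu₀ : Differentiable ℝ u := hu.differentiable_deriv_iterate (k := 0) (by norm_num)
  have hu₁ : Differentiable ℝ (deriv u) := hu.differentiable_deriv_iterate (k := 1) (by norm_num)
  rw [deriv_deriv_neg_deriv_add_mul ha (hasDerivAt_of_riccati ha hr) hu,
    deriv_neg_deriv_add_mul ha hu₀ hu₁]
  linear_combination deriv u x * hr x

end Riccati

theorem Lminus_factorization_general (c : ℝ)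
    (f : ℝ → ℝ) (hf : ContDiff ℝ 4 f) (x : ℝ) :
    Sc c (fun y => Lm c (Sst c f) y - c ^ 2 * Sst c f y) x
      = iteratedDeriv 4 f x - (Real.sqrt (2 - c ^ 2)) ^ 2 * iteratedDeriv 2 f x := by
  set β := Real.sqrt (2 - c ^ 2)
  set a : ℝ → ℝ := fun y => Real.sqrt 2 * Rc c y
  have hSc : ∀ u y, Sc c u y = deriv u y + a y * u y := fun _ _ => rfl
  have hSst : ∀ u, Sst c u = fun y => -deriv u y + a y * u y := fun _ => rfl
  have hLm : ∀ u y, Lm c u y - c ^ 2 * u y = -deriv (deriv u) y - Q c y * u y := fun u y => by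
    simp only [Lm]
    ring
  have ha_eq : a = fun y => β * tanh (β * y / 2) := funext fun y => by
    simp only [a, Rc, ← mul_assoc, ← Real.sqrt_mul zero_le_two, β]
    ring_nf
  have ha : ∀ y, HasDerivAt a (Q c y) y := fun y => ha_eq ▸ hasDerivAt_mul_tanh_mul_div_two β y
  have hr : ∀ y, 2 * Q c y + a y ^ 2 = β ^ 2 := fun y => by
    rw [ha_eq]
    show 2 * (β ^ 2 / 2 * (cosh (β * y / 2))⁻¹ ^ 2) + (β * tanh (β * y / 2)) ^ 2 = β ^ 2
    linear_combination β ^ 2 * Real.inv_cosh_sq_add_tanh_sq (β * y / 2)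
  have hintertwine : (fun y => Lm c (Sst c f) y - c ^ 2 * Sst c f y)
      = fun y => -deriv (Sst c (deriv f)) y := funext fun y => by
    simpa only [hLm, hSst] using neg_deriv_deriv_neg_deriv_add_mul_sub ha
      (hasDerivAt_of_riccati ha hr) (hf.of_le (by norm_num)) y
  have hfactor := deriv_deriv_neg_deriv_add_mul_add ha hr hf.deriv' x
  rw [hintertwine, hSc]
  simp only [deriv.fun_neg, hSst, iteratedDeriv_succ, iteratedDeriv_zero]
  linear_combination -hfactor

/-- Factorization identity `S_c ∘ (L₋ - c²) ∘ S_c* = (∂ₓ² - β²) ∂ₓ²`: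
for `f` of class `C⁴`, `S_c((L₋ - c²)(S_c* f)) = f'''' - β² f''`. -/
theorem Lminus_factorization (c : ℝ)
    (hc : c ∈ Set.Ioo (-Real.sqrt 2) (Real.sqrt 2))
    (f : ℝ → ℝ) (hf : ContDiff ℝ 4 f) (x : ℝ) :
    Sc c (fun y => Lm c (Sst c f) y - c ^ 2 * Sst c f y) x
      = iteratedDeriv 4 f x - (Real.sqrt (2 - c ^ 2)) ^ 2 * iteratedDeriv 2 f x :=
  Lminus_factorization_general c f hf x
end

section
/- Let c ∈ (−√2, √2). Let f : ℝ → ℝ be continuously differentiable with f and f' bounded, and assume ∫_ℝ f·Q_c = 0. Then the function g defined by g(x) = (1/Q_c(x))·∫_x^∞ f(y)·Q_c(y) dy also satisfies g(x) = −(1/Q_c(x))·∫_{−∞}^x f(y)·Q_c(y) dy for every x, g is twice continuously differentiable with g and g' bounded, and S_c* g = f, i.e. −g'(x) + √2·R_c(x)·g(x) = f(x) for all x ∈ ℝ. -/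
open Real MeasureTheory

/-! With `β = √(2 - c²)` one has `√2 R_c = β tanh(β·/2) = -Q_c'/Q_c`, so
`(1/Q_c)' = √2 R_c / Q_c` and the product rule gives `g' = √2 R_c g - f` for
`g = Q_c⁻¹ ∫_x^∞ f Q_c`; bootstrapping this ODE gives the regularity. Orthogonality
`∫ f Q_c = 0` turns the right tail into minus the left one. For the bound, with
`t = tanh(βx/2)`: `∫_x^∞ Q_c = β(1 - t)`, `∫_{-∞}^x Q_c = β(1 + t)` and
`Q_c(x) = (β²/2)(1 - t)(1 + t)`, so the right tail for `x ≥ 0` and the left one for `x ≤ 0`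
both give `|g| ≤ 2 sup|f| / β`. -/

open Filter Set Topology

lemma hasDerivAt_setIntegral_Ioi {h : ℝ → ℝ} (hint : Integrable h) (hcont : Continuous h)
    (x : ℝ) : HasDerivAt (fun z => ∫ y in Ioi z, h y) (-h x) x := by
  have heq : (fun z => ∫ y in Ioi z, h y) = fun z => (∫ y in Ioi 0, h y) - ∫ y in 0..z, h y :=
    funext fun z => by
      rw [← intervalIntegral.integral_Ioi_sub_Ioi' hint.integrableOn hint.integrableOn,
        sub_sub_cancel]
  rw [heq]
  exact (intervalIntegral.integral_hasDerivAt_right hint.intervalIntegrable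
    (hcont.stronglyMeasurableAtFilter _ _) hcont.continuousAt).const_sub _

noncomputable def weightedTail (w f : ℝ → ℝ) (x : ℝ) : ℝ :=
  (w x)⁻¹ * ∫ y in Ioi x, f y * w y

section weightedTail

variable {w φ f : ℝ → ℝ}

lemma weightedTail_eq_neg_setIntegral_Iic (hint : Integrable fun y => f y * w y)
    (horth : ∫ y, f y * w y = 0) (x : ℝ) :
    weightedTail w f x = -(w x)⁻¹ * ∫ y in Iic x, f y * w y := by
  have h := intervalIntegral.integral_Iic_add_Ioi (b := x) hint.integrableOn hint.integrableOn
  rw [horth] at h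
  rw [weightedTail, neg_mul, ← mul_neg, ← eq_neg_of_add_eq_zero_right h]

lemma hasDerivAt_weightedTail (hint : Integrable fun y => f y * w y)
    (hcont : Continuous fun y => f y * w y) (hw : ∀ x, w x ≠ 0)
    (hw' : ∀ x, HasDerivAt (fun y => (w y)⁻¹) (φ x * (w x)⁻¹) x) (x : ℝ) :
    HasDerivAt (weightedTail w f) (φ x * weightedTail w f x - f x) x := by
  refine ((hw' x).mul (hasDerivAt_setIntegral_Ioi hint hcont x)).congr_deriv ?_
  have := hw x
  rw [weightedTail]
  field_simp
  ring

lemma contDiff_of_hasDerivAt_eq_mul_sub {g : ℝ → ℝ}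
    (hg : ∀ x, HasDerivAt g (φ x * g x - f x) x) {n : ℕ} (hφ : ContDiff ℝ n φ)
    (hf : ContDiff ℝ n f) : ContDiff ℝ (n + 1) g := by
  have hderiv : deriv g = fun x => φ x * g x - f x := funext fun x => (hg x).deriv
  have hdiff : Differentiable ℝ g := fun x => (hg x).differentiableAt
  induction n with
  | zero =>
    refine contDiff_succ_iff_deriv.mpr ⟨hdiff, by simp, ?_⟩
    rw [hderiv]
    exact (hφ.mul (contDiff_zero.mpr hdiff.continuous)).sub hf
  | succ n ih =>
    have hg' := ih hφ.of_succ hf.of_succ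
    refine contDiff_succ_iff_deriv.mpr ⟨hdiff, by simp, ?_⟩
    rw [hderiv]
    exact (hφ.mul hg').sub hf

end weightedTail

lemma abs_inv_mul_le_of_abs_le_mul_sub {b M t I : ℝ} (hb : 0 < b) (ht₀ : 0 ≤ t)
    (ht₁ : t < 1) (hI : |I| ≤ M * (b - b * t)) :
    |(b ^ 2 / 2 * (1 - t ^ 2))⁻¹ * I| ≤ 2 * M / b := by
  have hbt : 0 < b - b * t := by nlinarith
  have hM : 0 ≤ M := nonneg_of_mul_nonneg_left ((abs_nonneg I).trans hI) hbt
  have hP : 0 < b ^ 2 / 2 * (1 - t ^ 2) := mul_pos (by positivity) (by nlinarith)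
  rw [abs_mul, abs_inv, abs_of_pos hP, inv_mul_le_iff₀ hP]
  calc |I| ≤ M * (b - b * t) := hI
    _ ≤ M * (b - b * t) * (1 + t) := le_mul_of_one_le_right (by positivity) (by linarith)
    _ = b ^ 2 / 2 * (1 - t ^ 2) * (2 * M / b) := by field_simp; ring

namespace Real

lemma tanh_eq_one_sub (x : ℝ) : tanh x = 1 - 2 / (exp (2 * x) + 1) := by
  have h : exp (2 * x) = exp x * exp x := by rw [← exp_add]; ring_nf
  rw [tanh_eq, exp_neg, h]
  field_simp
  ring

lemma tendsto_tanh_atTop : Tendsto tanh atTop (𝓝 1) := by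
  have h : Tendsto (fun x : ℝ => exp (2 * x) + 1) atTop atTop :=
    tendsto_atTop_add_const_right _ _
      (tendsto_exp_atTop.comp (tendsto_id.const_mul_atTop two_pos))
  simpa [funext tanh_eq_one_sub] using (tendsto_const_nhds.div_atTop h).const_sub (1 : ℝ)

lemma tendsto_tanh_atBot : Tendsto tanh atBot (𝓝 (-1)) := by
  simpa [Function.comp_def, tanh_neg] using (tendsto_tanh_atTop.comp tendsto_neg_atBot_atTop).neg

lemma tanh_nonneg {x : ℝ} (hx : 0 ≤ x) : 0 ≤ tanh x := by
  rw [tanh_eq_sinh_div_cosh]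
  exact div_nonneg (sinh_nonneg_iff.mpr hx) (cosh_pos x).le

lemma inv_cosh_sq (x : ℝ) : (cosh x)⁻¹ ^ 2 = 1 - tanh x ^ 2 := by
  have := cosh_sq x
  rw [tanh_eq_sinh_div_cosh]
  field_simp
  linarith

lemma hasDerivAt_tanh_s9 (x : ℝ) : HasDerivAt tanh ((cosh x)⁻¹ ^ 2) x := by
  have h := (hasDerivAt_sinh x).div (hasDerivAt_cosh x) (cosh_pos x).ne'
  have htanh : sinh / cosh = tanh := funext fun y => (tanh_eq_sinh_div_cosh y).symm
  rw [htanh] at h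
  refine h.congr_deriv ?_
  have := cosh_sq x
  field_simp
  linarith

lemma contDiff_tanh {n : WithTop ℕ∞} : ContDiff ℝ n tanh := by
  rw [funext tanh_eq_sinh_div_cosh]
  exact contDiff_sinh.div contDiff_cosh fun x => (cosh_pos x).ne'

end Real

noncomputable def sechProfile (b x : ℝ) : ℝ := b ^ 2 / 2 * (cosh (b * x / 2))⁻¹ ^ 2

section sechProfile

variable {b M : ℝ} {f : ℝ → ℝ}

lemma sechProfile_eq_one_sub_tanh_sq (b x : ℝ) :
    sechProfile b x = b ^ 2 / 2 * (1 - tanh (b * x / 2) ^ 2) := by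
  rw [sechProfile, inv_cosh_sq]

lemma sechProfile_pos (hb : b ≠ 0) (x : ℝ) : 0 < sechProfile b x := by
  have := cosh_pos (b * x / 2)
  unfold sechProfile
  positivity

lemma continuous_sechProfile (b : ℝ) : Continuous (sechProfile b) := by
  unfold sechProfile
  fun_prop (disch := exact fun x => (cosh_pos _).ne')

lemma hasDerivAt_mul_tanh (b x : ℝ) :
    HasDerivAt (fun y => b * tanh (b * y / 2)) (sechProfile b x) x := by
  have hlin := ((hasDerivAt_id' x).const_mul b).div_const 2
  refine (((hasDerivAt_tanh_s9 _).comp x hlin).const_mul b).congr_deriv ?_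
  rw [sechProfile]
  ring

lemma hasDerivAt_inv_sechProfile (hb : b ≠ 0) (x : ℝ) :
    HasDerivAt (fun y => (sechProfile b y)⁻¹)
      (b * tanh (b * x / 2) * (sechProfile b x)⁻¹) x := by
  have hlin := ((hasDerivAt_id' x).const_mul b).div_const 2
  have h := (((hasDerivAt_cosh _).comp x hlin).pow 2).const_mul (2 / b ^ 2)
  have heq : (fun y => (sechProfile b y)⁻¹) = fun y => 2 / b ^ 2 * cosh (b * y / 2) ^ 2 := by
    funext y
    rw [sechProfile]
    field_simp
  rw [heq]
  refine h.congr_deriv ?_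
  have := (cosh_pos (b * x / 2)).ne'
  rw [sechProfile, tanh_eq_sinh_div_cosh, Function.comp_apply]
  field_simp
  ring

lemma integrable_sechProfile (hb : 0 < b) : Integrable (sechProfile b) := by
  refine integrable_of_intervalIntegral_norm_bounded (2 * b)
    (fun r => (continuous_sechProfile b).integrableOn_Ioc)
    (tendsto_neg_atBot_iff.mpr tendsto_id) tendsto_id ?_
  refine Eventually.of_forall fun r => ?_
  dsimp only [id]
  have hnorm : ∀ y, ‖sechProfile b y‖ = sechProfile b y := fun y =>
    norm_of_nonneg (sechProfile_pos hb.ne' y).le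
  rw [intervalIntegral.integral_congr fun y _ => hnorm y,
    intervalIntegral.integral_eq_sub_of_hasDerivAt (fun y _ => hasDerivAt_mul_tanh b y)
      ((continuous_sechProfile b).intervalIntegrable _ _)]
  have h1 := tanh_lt_one (b * r / 2)
  have h2 := neg_one_lt_tanh (b * -r / 2)
  nlinarith

lemma setIntegral_Ioi_sechProfile (hb : 0 < b) (x : ℝ) :
    ∫ y in Ioi x, sechProfile b y = b - b * tanh (b * x / 2) := by
  have hlim : Tendsto (fun y => b * tanh (b * y / 2)) atTop (𝓝 (b * 1)) :=
    (tendsto_tanh_atTop.comp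
      ((tendsto_id.const_mul_atTop hb).atTop_div_const two_pos)).const_mul b
  rw [mul_one] at hlim
  exact integral_Ioi_of_hasDerivAt_of_tendsto' (fun y _ => hasDerivAt_mul_tanh b y)
    (integrable_sechProfile hb).integrableOn hlim

lemma setIntegral_Iic_sechProfile (hb : 0 < b) (x : ℝ) :
    ∫ y in Iic x, sechProfile b y = b + b * tanh (b * x / 2) := by
  have hlim : Tendsto (fun y => b * tanh (b * y / 2)) atBot (𝓝 (b * -1)) :=
    (tendsto_tanh_atBot.comp
      ((tendsto_id.const_mul_atBot hb).atBot_div_const two_pos)).const_mul b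
  rw [mul_neg_one] at hlim
  rw [integral_Iic_of_hasDerivAt_of_tendsto' (fun y _ => hasDerivAt_mul_tanh b y)
    (integrable_sechProfile hb).integrableOn hlim, sub_neg_eq_add, add_comm]

lemma integrable_mul_sechProfile (hb : 0 < b) (hf : Continuous f) (hM : ∀ y, |f y| ≤ M) :
    Integrable fun y => f y * sechProfile b y :=
  (integrable_sechProfile hb).bdd_mul hf.aestronglyMeasurable (ae_of_all _ hM)

lemma abs_setIntegral_mul_sechProfile_le (hb : 0 < b) (hM : ∀ y, |f y| ≤ M) (s : Set ℝ) :
    |∫ y in s, f y * sechProfile b y| ≤ M * ∫ y in s, sechProfile b y := by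
  have hP (y : ℝ) : 0 ≤ sechProfile b y := (sechProfile_pos hb.ne' y).le
  calc |∫ y in s, f y * sechProfile b y| = ‖∫ y in s, f y * sechProfile b y‖ :=
        (norm_eq_abs _).symm
    _ ≤ ∫ y in s, M * sechProfile b y :=
        norm_integral_le_of_norm_le ((integrable_sechProfile hb).const_mul M).integrableOn
          (ae_of_all _ fun y => by
            rw [norm_mul, norm_of_nonneg (hP y)]
            exact mul_le_mul_of_nonneg_right (hM y) (hP y))
    _ = M * ∫ y in s, sechProfile b y := integral_const_mul M _

lemma abs_weightedTail_sechProfile_le (hb : 0 < b) (hf : Continuous f) (hM : ∀ y, |f y| ≤ M)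
    (horth : ∫ y, f y * sechProfile b y = 0) (x : ℝ) :
    |weightedTail (sechProfile b) f x| ≤ 2 * M / b := by
  rcases le_total 0 x with hx | hx
  · rw [weightedTail, sechProfile_eq_one_sub_tanh_sq]
    refine abs_inv_mul_le_of_abs_le_mul_sub hb (tanh_nonneg (by positivity)) (tanh_lt_one _) ?_
    rw [← setIntegral_Ioi_sechProfile hb]
    exact abs_setIntegral_mul_sechProfile_le hb hM _
  · rw [weightedTail_eq_neg_setIntegral_Iic (integrable_mul_sechProfile hb hf hM) horth,
      neg_mul, abs_neg, sechProfile_eq_one_sub_tanh_sq, ← neg_sq (tanh _), ← tanh_neg]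
    refine abs_inv_mul_le_of_abs_le_mul_sub hb (tanh_nonneg (by nlinarith)) (tanh_lt_one _) ?_
    rw [tanh_neg, mul_neg, sub_neg_eq_add, ← setIntegral_Iic_sechProfile hb]
    exact abs_setIntegral_mul_sechProfile_le hb hM _

lemma hasDerivAt_weightedTail_sechProfile (hb : 0 < b) (hf : Continuous f)
    (hM : ∀ y, |f y| ≤ M) (x : ℝ) :
    HasDerivAt (weightedTail (sechProfile b) f)
      (b * tanh (b * x / 2) * weightedTail (sechProfile b) f x - f x) x :=
  hasDerivAt_weightedTail (integrable_mul_sechProfile hb hf hM)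
    (hf.mul (continuous_sechProfile b)) (fun y => (sechProfile_pos hb.ne' y).ne')
    (hasDerivAt_inv_sechProfile hb.ne') x

lemma abs_deriv_weightedTail_sechProfile_le (hb : 0 < b) (hf : Continuous f)
    (hM : ∀ y, |f y| ≤ M) (horth : ∫ y, f y * sechProfile b y = 0) (x : ℝ) :
    |deriv (weightedTail (sechProfile b) f) x| ≤ 3 * M := by
  have hg := abs_weightedTail_sechProfile_le hb hf hM horth x
  have ht := (abs_tanh_lt_one (b * x / 2)).le
  rw [(hasDerivAt_weightedTail_sechProfile hb hf hM x).deriv]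
  calc _ ≤ |b * tanh (b * x / 2) * weightedTail (sechProfile b) f x| + |f x| := abs_sub _ _
    _ ≤ b * 1 * (2 * M / b) + M := by
        rw [abs_mul, abs_mul, abs_of_pos hb]
        gcongr
        exact hM x
    _ = 3 * M := by field_simp; ring

end sechProfile

lemma sqrt_two_mul_Rc (c x : ℝ) :
    √2 * Rc c x = √(2 - c ^ 2) * tanh (√(2 - c ^ 2) * x / 2) := by
  rw [Rc, ← mul_assoc, ← sqrt_mul zero_le_two, mul_div_cancel₀ _ two_ne_zero]

theorem Sst_inverse_general (c : ℝ)
    (hc : c ∈ Set.Ioo (-Real.sqrt 2) (Real.sqrt 2))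
    (f : ℝ → ℝ) (hf : ContDiff ℝ 1 f)
    (hfb : ∃ M, ∀ x, |f x| ≤ M)
    (horth : ∫ y, f y * Q c y = 0) :
    (∀ x, (Q c x)⁻¹ * ∫ y in Set.Ioi x, f y * Q c y
        = -(Q c x)⁻¹ * ∫ y in Set.Iic x, f y * Q c y) ∧
    ContDiff ℝ 2 (fun x => (Q c x)⁻¹ * ∫ y in Set.Ioi x, f y * Q c y) ∧
    (∃ M, ∀ x, |(Q c x)⁻¹ * ∫ y in Set.Ioi x, f y * Q c y| ≤ M) ∧
    (∃ M, ∀ x,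
      |deriv (fun z => (Q c z)⁻¹ * ∫ y in Set.Ioi z, f y * Q c y) x| ≤ M) ∧
    (∀ x, -deriv (fun z => (Q c z)⁻¹ * ∫ y in Set.Ioi z, f y * Q c y) x
        + Real.sqrt 2 * Rc c x
          * ((Q c x)⁻¹ * ∫ y in Set.Ioi x, f y * Q c y) = f x) := by
  have hb : 0 < √(2 - c ^ 2) := sqrt_pos.mpr (sub_pos.mpr (sq_lt.mpr hc))
  obtain ⟨M, hM⟩ := hfb
  have hQ : Q c = sechProfile √(2 - c ^ 2) := rfl
  have hg := hasDerivAt_weightedTail_sechProfile hb hf.continuous hM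
  rw [hQ] at horth ⊢
  refine ⟨weightedTail_eq_neg_setIntegral_Iic
      (integrable_mul_sechProfile hb hf.continuous hM) horth,
    contDiff_of_hasDerivAt_eq_mul_sub hg (n := 1)
      (contDiff_const.mul (contDiff_tanh.comp (by fun_prop))) hf,
    ⟨_, abs_weightedTail_sechProfile_le hb hf.continuous hM horth⟩,
    ⟨_, abs_deriv_weightedTail_sechProfile_le hb hf.continuous hM horth⟩, fun x => ?_⟩
  change -deriv (weightedTail _ f) x + _ * weightedTail _ f x = f x
  rw [(hg x).deriv, sqrt_two_mul_Rc]
  ring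

/-- Inversion of `S_c*`: if `f` is `C¹` with `f, f'` bounded and `∫ f Q_c = 0`,
then `g(x) = Q_c(x)⁻¹ ∫_x^∞ f Q_c` equals `-Q_c(x)⁻¹ ∫_{-∞}^x f Q_c`, is `C²`
with `g, g'` bounded, and satisfies `S_c* g = f`. -/
theorem Sst_inverse (c : ℝ)
    (hc : c ∈ Set.Ioo (-Real.sqrt 2) (Real.sqrt 2))
    (f : ℝ → ℝ) (hf : ContDiff ℝ 1 f)
    (hfb : ∃ M, ∀ x, |f x| ≤ M) (hf'b : ∃ M, ∀ x, |deriv f x| ≤ M)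
    (horth : ∫ y, f y * Q c y = 0) :
    (∀ x, (Q c x)⁻¹ * ∫ y in Set.Ioi x, f y * Q c y
        = -(Q c x)⁻¹ * ∫ y in Set.Iic x, f y * Q c y) ∧
    ContDiff ℝ 2 (fun x => (Q c x)⁻¹ * ∫ y in Set.Ioi x, f y * Q c y) ∧
    (∃ M, ∀ x, |(Q c x)⁻¹ * ∫ y in Set.Ioi x, f y * Q c y| ≤ M) ∧
    (∃ M, ∀ x,
      |deriv (fun z => (Q c z)⁻¹ * ∫ y in Set.Ioi z, f y * Q c y) x| ≤ M) ∧
    (∀ x, -deriv (fun z => (Q c z)⁻¹ * ∫ y in Set.Ioi z, f y * Q c y) x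
        + Real.sqrt 2 * Rc c x
          * ((Q c x)⁻¹ * ∫ y in Set.Ioi x, f y * Q c y) = f x) :=
  Sst_inverse_general c hc f hf hfb horth
end

section
/- For every κ > 0 there exists a constant C > 0 such that for every A > 0 and every continuously differentiable function f : ℝ → ℝ, one has ∫_0^A f(x)²·ρ(x)^κ dx ≤ C·( ∫_0^1 f² + ( ∫_0^A (f')² )^{1/2} · ( ∫_0^A f²·ρ^{2κ} )^{1/2} ), where ρ(x) = sech(x). -/
/-!
Since `(ρ^κ)' = -κ tanh · ρ^κ` and `tanh ≥ tanh 1 > 0` on `[1, ∞)`, integrating the derivative of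
`f² ρ^κ` over `[1, A]` bounds `κ tanh 1 · ∫₁^A f² ρ^κ` by the boundary value `f(1)² ρ(1)^κ` plus the
cross term `2 ∫ |f' · f ρ^κ|`. Integrating the derivative of `x f(x)² ρ(x)^κ` over `[0, 1]` bounds
the boundary value by `∫₀¹ f² ρ^κ ≤ ∫₀¹ f²` plus the same cross term. Finally, the cross term over
`[0, A]` is at most `2 (∫ f'²)^{1/2} (∫ f² ρ^{2κ})^{1/2}` by Cauchy–Schwarz.
-/

open Real MeasureTheory intervalIntegral

/-- The weight `ρ(x) = sech x`. -/
noncomputable def rho (x : ℝ) : ℝ := (Real.cosh x)⁻¹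

open Set

theorem intervalIntegral.integral_abs_mul_le_sqrt_mul_sqrt {a b : ℝ} (hab : a ≤ b)
    {u v : ℝ → ℝ} (hu : Continuous u) (hv : Continuous v) :
    ∫ x in a..b, |u x * v x| ≤ √(∫ x in a..b, u x ^ 2) * √(∫ x in a..b, v x ^ 2) := by
  have memLp {w : ℝ → ℝ} (hw : Continuous w) :
      MemLp (fun x => |w x|) (ENNReal.ofReal 2) (volume.restrict (Ioc a b)) := by
    rw [ENNReal.ofReal_ofNat, memLp_two_iff_integrable_sq hw.abs.aestronglyMeasurable]
    exact (hw.abs.pow 2).integrableOn_Ioc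
  simp only [integral_of_le hab, sqrt_eq_rpow, abs_mul]
  convert integral_mul_le_Lp_mul_Lq_of_nonneg Real.HolderConjugate.two_two
    (ae_of_all _ fun x => abs_nonneg (u x)) (ae_of_all _ fun x => abs_nonneg (v x))
    (memLp hu) (memLp hv) using 3 <;> simp [sq_abs]

theorem Real.tanh_pos {x : ℝ} (hx : 0 < x) : 0 < tanh x := by
  rw [tanh_eq_sinh_div_cosh]
  exact div_pos (sinh_pos_iff.2 hx) (cosh_pos x)

theorem Real.tanh_monotone : Monotone tanh := fun x y hxy => by
  have mem (z : ℝ) : tanh z ∈ Ioo (-1) 1 := ⟨neg_one_lt_tanh z, tanh_lt_one z⟩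
  rwa [← artanh_le_artanh_iff (mem x) (mem y), artanh_tanh, artanh_tanh]

lemma rho_pos (x : ℝ) : 0 < rho x := inv_pos.2 (cosh_pos x)

lemma rho_le_one (x : ℝ) : rho x ≤ 1 := inv_le_one_of_one_le₀ (one_le_cosh x)

lemma continuous_rho : Continuous rho :=
  continuous_cosh.inv₀ fun x => (cosh_pos x).ne'

lemma continuous_rho_rpow (κ : ℝ) : Continuous fun x => rho x ^ κ :=
  continuous_rho.rpow_const fun x => Or.inl (rho_pos x).ne'

lemma rho_rpow_le_one {κ : ℝ} (hκ : 0 ≤ κ) (x : ℝ) : rho x ^ κ ≤ 1 :=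
  rpow_le_one (rho_pos x).le (rho_le_one x) hκ

lemma rho_rpow_sq (κ x : ℝ) : (rho x ^ κ) ^ 2 = rho x ^ (2 * κ) := by
  rw [← rpow_natCast, ← rpow_mul (rho_pos x).le, mul_comm]
  norm_num

lemma hasDerivAt_rho (x : ℝ) : HasDerivAt rho (-(tanh x * rho x)) x := by
  refine ((hasDerivAt_cosh x).inv (cosh_pos x).ne').congr_deriv ?_
  rw [tanh_eq_sinh_div_cosh, rho]
  field_simp

lemma hasDerivAt_rho_rpow (κ x : ℝ) :
    HasDerivAt (fun y => rho y ^ κ) (-(κ * tanh x * rho x ^ κ)) x := by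
  convert (hasDerivAt_rho x).rpow_const (p := κ) (Or.inl (rho_pos x).ne') using 1
  rw [rpow_sub_one (rho_pos x).ne']
  field_simp [(rho_pos x).ne']

lemma sq_mul_rho_rpow_nonneg (κ t x : ℝ) : 0 ≤ t ^ 2 * rho x ^ κ :=
  mul_nonneg (sq_nonneg t) (rpow_nonneg (rho_pos x).le κ)

lemma sq_mul_rho_rpow_le_sq {κ : ℝ} (hκ : 0 ≤ κ) (t x : ℝ) : t ^ 2 * rho x ^ κ ≤ t ^ 2 :=
  mul_le_of_le_one_right (sq_nonneg t) (rho_rpow_le_one hκ x)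

section

variable {κ : ℝ} {f : ℝ → ℝ}

lemma integral_sq_mul_rho_rpow_le_integral_sq (hκ : 0 ≤ κ) (hf : Continuous f) {a b : ℝ}
    (hab : a ≤ b) : ∫ x in a..b, f x ^ 2 * rho x ^ κ ≤ ∫ x in a..b, f x ^ 2 := by
  have := continuous_rho_rpow κ
  exact integral_mono_on hab
    ((by fun_prop : Continuous fun x => f x ^ 2 * rho x ^ κ).intervalIntegrable _ _)
    ((by fun_prop : Continuous fun x => f x ^ 2).intervalIntegrable _ _)
    fun x _ => sq_mul_rho_rpow_le_sq hκ _ x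

lemma hasDerivAt_sq_mul_rho_rpow (hf : Differentiable ℝ f) (x : ℝ) :
    HasDerivAt (fun y => f y ^ 2 * rho y ^ κ)
      (2 * f x * deriv f x * rho x ^ κ - κ * tanh x * (f x ^ 2 * rho x ^ κ)) x := by
  refine (((hf x).hasDerivAt.pow 2).mul (hasDerivAt_rho_rpow κ x)).congr_deriv ?_
  simp only [Pi.pow_apply]
  push_cast
  ring

lemma sq_mul_rho_rpow_one_le (hκ : 0 ≤ κ) (hf : ContDiff ℝ 1 f) :
    f 1 ^ 2 * rho 1 ^ κ ≤
      ∫ x in (0:ℝ)..1, (f x ^ 2 * rho x ^ κ + 2 * |deriv f x * (f x * rho x ^ κ)|) := by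
  have := continuous_rho_rpow κ
  have := hf.continuous
  have := hf.continuous_deriv le_rfl
  have key := sub_le_integral_of_hasDeriv_right_of_le zero_le_one
    (g := fun x => x * (f x ^ 2 * rho x ^ κ)) (by fun_prop)
    (fun x _ => ((hasDerivAt_id x).mul
      (hasDerivAt_sq_mul_rho_rpow (hf.differentiable one_ne_zero) x)).hasDerivWithinAt)
    (by fun_prop : Continuous fun x =>
      f x ^ 2 * rho x ^ κ + 2 * |deriv f x * (f x * rho x ^ κ)|).integrableOn_Icc ?_
  · simpa using key
  rintro x ⟨hx0, hx1⟩
  have hcross : x * (deriv f x * (f x * rho x ^ κ)) ≤ |deriv f x * (f x * rho x ^ κ)| :=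
    calc _ ≤ |x| * |deriv f x * (f x * rho x ^ κ)| := (le_abs_self _).trans (abs_mul _ _).le
      _ ≤ _ := mul_le_of_le_one_left (abs_nonneg _) (abs_le.2 ⟨by linarith, hx1.le⟩)
  have hdrift : 0 ≤ x * (κ * tanh x * (f x ^ 2 * rho x ^ κ)) := by
    have := sq_mul_rho_rpow_nonneg κ (f x) x
    have := tanh_pos hx0
    positivity
  simp only [id]
  linarith

lemma sq_mul_rho_rpow_sub_le {A : ℝ} (hκ : 0 ≤ κ) (hf : ContDiff ℝ 1 f) (hA : 1 ≤ A) :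
    f A ^ 2 * rho A ^ κ - f 1 ^ 2 * rho 1 ^ κ ≤
      ∫ x in (1:ℝ)..A,
        (2 * |deriv f x * (f x * rho x ^ κ)| - κ * tanh 1 * (f x ^ 2 * rho x ^ κ)) := by
  have := continuous_rho_rpow κ
  have := hf.continuous
  have := hf.continuous_deriv le_rfl
  refine sub_le_integral_of_hasDeriv_right_of_le hA (by fun_prop)
    (fun x _ => (hasDerivAt_sq_mul_rho_rpow (hf.differentiable one_ne_zero) x).hasDerivWithinAt)
    (by fun_prop : Continuous fun x =>
      2 * |deriv f x * (f x * rho x ^ κ)| - κ * tanh 1 * (f x ^ 2 * rho x ^ κ)).integrableOn_Icc ?_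
  rintro x ⟨hx1, -⟩
  have hcross : 2 * f x * deriv f x * rho x ^ κ ≤ 2 * |deriv f x * (f x * rho x ^ κ)| := by
    linarith [le_abs_self (deriv f x * (f x * rho x ^ κ))]
  have hdrift : κ * tanh 1 * (f x ^ 2 * rho x ^ κ) ≤ κ * tanh x * (f x ^ 2 * rho x ^ κ) := by
    have := sq_mul_rho_rpow_nonneg κ (f x) x
    gcongr
    exact tanh_monotone hx1.le
  linarith

lemma integral_sq_mul_rho_rpow_le_of_one_le {A : ℝ} (hκ : 0 < κ) (hf : ContDiff ℝ 1 f)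
    (hA : 1 ≤ A) :
    ∫ x in (0:ℝ)..A, f x ^ 2 * rho x ^ κ ≤
      (∫ x in (0:ℝ)..1, f x ^ 2)
        + ((∫ x in (0:ℝ)..1, f x ^ 2)
          + 2 * ∫ x in (0:ℝ)..A, |deriv f x * (f x * rho x ^ κ)|) / (κ * tanh 1) := by
  have := continuous_rho_rpow κ
  have := hf.continuous
  have := hf.continuous_deriv le_rfl
  have integrable {g : ℝ → ℝ} (hg : Continuous g) (a b : ℝ) : IntervalIntegrable g volume a b :=
    hg.intervalIntegrable a b
  have h₀ := sq_mul_rho_rpow_one_le hκ.le hf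
  have h₁ := sq_mul_rho_rpow_sub_le hκ.le hf hA
  rw [integral_add (integrable (by fun_prop) _ _) (integrable (by fun_prop) _ _),
    intervalIntegral.integral_const_mul] at h₀
  rw [integral_sub (integrable (by fun_prop) _ _) (integrable (by fun_prop) _ _),
    intervalIntegral.integral_const_mul, intervalIntegral.integral_const_mul] at h₁
  have hS := integral_sq_mul_rho_rpow_le_integral_sq hκ.le hf.continuous zero_le_one
  have hJ := integral_add_adjacent_intervals (b := 1)
    (integrable (by fun_prop : Continuous fun x => |deriv f x * (f x * rho x ^ κ)|) 0 1)
    (integrable (by fun_prop) 1 A)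
  have hI₁ : ∫ x in (1:ℝ)..A, f x ^ 2 * rho x ^ κ ≤
      ((∫ x in (0:ℝ)..1, f x ^ 2)
        + 2 * ∫ x in (0:ℝ)..A, |deriv f x * (f x * rho x ^ κ)|) / (κ * tanh 1) := by
    rw [le_div_iff₀ (mul_pos hκ (tanh_pos one_pos))]
    linarith [sq_mul_rho_rpow_nonneg κ (f A) A]
  rw [← integral_add_adjacent_intervals (integrable (by fun_prop) 0 1) (integrable (by fun_prop) 1 A)]
  linarith

lemma integral_abs_deriv_mul_le (hf : ContDiff ℝ 1 f) {A : ℝ} (hA : 0 ≤ A) :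
    ∫ x in (0:ℝ)..A, |deriv f x * (f x * rho x ^ κ)| ≤
      √(∫ x in (0:ℝ)..A, deriv f x ^ 2) * √(∫ x in (0:ℝ)..A, f x ^ 2 * rho x ^ (2 * κ)) := by
  simpa only [Pi.mul_apply, mul_pow, rho_rpow_sq] using integral_abs_mul_le_sqrt_mul_sqrt hA
    (hf.continuous_deriv le_rfl) (hf.continuous.mul (continuous_rho_rpow κ))

end

/-- Localized weighted bound:
`∫_0^A f² ρ^κ ≲ ∫_0^1 f² + (∫_0^A (f')²)^{1/2} (∫_0^A f² ρ^{2κ})^{1/2}`. -/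
theorem localized_weighted_bound (κ : ℝ) (hκ : 0 < κ) :
    ∃ C > 0, ∀ A : ℝ, 0 < A → ∀ f : ℝ → ℝ, ContDiff ℝ 1 f →
      (∫ x in (0:ℝ)..A, f x ^ 2 * rho x ^ κ)
        ≤ C * ((∫ x in (0:ℝ)..1, f x ^ 2)
          + Real.sqrt (∫ x in (0:ℝ)..A, (deriv f x) ^ 2)
            * Real.sqrt (∫ x in (0:ℝ)..A, f x ^ 2 * rho x ^ (2 * κ))) := by
  set c := κ * tanh 1
  have hc : 0 < c := mul_pos hκ (tanh_pos one_pos)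
  refine ⟨1 + 2 / c, by positivity, fun A hA f hf => ?_⟩
  set S := ∫ x in (0:ℝ)..1, f x ^ 2
  set T := √(∫ x in (0:ℝ)..A, deriv f x ^ 2) * √(∫ x in (0:ℝ)..A, f x ^ 2 * rho x ^ (2 * κ))
  have hS : 0 ≤ S := integral_nonneg zero_le_one fun x _ => sq_nonneg _
  have hT : 0 ≤ T := by positivity
  rcases le_total A 1 with hA1 | hA1
  · calc ∫ x in (0:ℝ)..A, f x ^ 2 * rho x ^ κ
        ≤ ∫ x in (0:ℝ)..A, f x ^ 2 :=
          integral_sq_mul_rho_rpow_le_integral_sq hκ.le hf.continuous hA.le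
      _ ≤ S := integral_mono_interval le_rfl hA.le hA1 (ae_of_all _ fun x => sq_nonneg _)
            ((hf.continuous.pow 2).intervalIntegrable _ _)
      _ ≤ (1 + 2 / c) * (S + T) := by nlinarith [div_pos two_pos hc]
  · calc ∫ x in (0:ℝ)..A, f x ^ 2 * rho x ^ κ
        ≤ S + (S + 2 * ∫ x in (0:ℝ)..A, |deriv f x * (f x * rho x ^ κ)|) / c :=
          integral_sq_mul_rho_rpow_le_of_one_le hκ hf hA1
      _ ≤ S + (S + 2 * T) / c := by gcongr; exact integral_abs_deriv_mul_le hf hA.le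
      _ ≤ S + 2 * (S + T) / c := by gcongr; linarith
      _ ≤ (1 + 2 / c) * (S + T) := by rw [add_mul, one_mul, div_mul_eq_mul_div]; linarith
end
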